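/- arXiv:1402.6945 — 6 statements merged into one kernel-verified Lean document; each statement's English description precedes it below -/
import Mathlib

section
/- Let G = Z_g be a cyclic group of order g, let i, j ∈ G, representing i by its least nonnegative residue, with i ≠ 0 and 2i < g. For such i and any j ∉ {0,1}, the matrix X(i,j) = A^{i,0}_{j,0} + A^{i-1,j}_{1,0} + A^{i-2,j+1}_{1,0} + ... + A^{1,i+j-2}_{1,0} + A^{0,i+j-1}_{1,0} is admissible for G, where A^{x,y}_{u,v} = E^x_u + E^y_v − E^x_v − E^y_u. -/
/-- The elementary matrix with a single `1` in position `(x, y)`. -/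
def Emat (K : Type) [DecidableEq K] (x y : K) : Matrix K K ℤ :=
  Matrix.single x y 1

/-- A `K × K` integer matrix is admissible for the finite abelian group `K` if every row sums
to zero, every column sums to zero, and for each `k ∈ K` the sum of the entries `M i j`
over pairs `(i, j)` with `i + j = k` is zero. -/
def Admissible (K : Type) [AddCommGroup K] [Fintype K] [DecidableEq K]
    (M : Matrix K K ℤ) : Prop :=
  (∀ i, ∑ j, M i j = 0) ∧ (∀ j, ∑ i, M i j = 0) ∧
  (∀ k : K, (∑ p : K × K, if p.1 + p.2 = k then M p.1 p.2 else 0) = 0)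

/-- The degree of an integer matrix: the sum of its positive entries. -/
def matDeg (K : Type) [Fintype K] (M : Matrix K K ℤ) : ℤ :=
  ∑ p : K × K, max (M p.1 p.2) 0
/-- The matrix `A^{x,y}_{u,v} = E^x_u + E^y_v − E^x_v − E^y_u`. -/
def Amat (K : Type) [DecidableEq K] (x y u v : K) : Matrix K K ℤ :=
  Emat K x u + Emat K y v - Emat K x v - Emat K y u
/-- `X(i,j) = A^{i,0}_{j,0} + Σ_{a=1}^{i} A^{i−a, j+a−1}_{1,0}` (indices in `ZMod g`,
the element `i` being represented by its least nonnegative residue `i.val`). -/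
def Xmat (g : ℕ) [NeZero g] (i j : ZMod g) : Matrix (ZMod g) (ZMod g) ℤ :=
  Amat (ZMod g) i 0 j 0 +
    ∑ a ∈ Finset.Icc 1 (ZMod.val i),
      Amat (ZMod g) (i - (a : ZMod g)) (j + (a : ZMod g) - 1) 1 0

section helpers
variable {K : Type} [AddCommGroup K] [Fintype K] [DecidableEq K]

omit [AddCommGroup K] in
lemma Emat_row (x u r : K) : ∑ c, Emat K x u r c = if r = x then 1 else 0 := by
  simp [Emat, Matrix.single, ite_and, eq_comm]

omit [AddCommGroup K] in
lemma Emat_col (x u c : K) : ∑ r, Emat K x u r c = if c = u then 1 else 0 := by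
  simp [Emat, Matrix.single, ite_and, eq_comm]

lemma Emat_diag (x u k : K) :
    (∑ p : K × K, if p.1 + p.2 = k then Emat K x u p.1 p.2 else 0)
      = if x + u = k then 1 else 0 := by
  rw [Finset.sum_eq_single (x, u)]
  · simp [Emat]
  · rintro ⟨a, b⟩ - hab
    have : ¬(x = a ∧ u = b) := by
      intro ⟨h1, h2⟩; exact hab (by simp [h1, h2])
    simp [Emat, Matrix.single, this]
  · simp

omit [AddCommGroup K] in
lemma Amat_row (x y u v r : K) : ∑ c, Amat K x y u v r c = 0 := by
  simp only [Amat, Matrix.sub_apply, Matrix.add_apply, Finset.sum_sub_distrib,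
    Finset.sum_add_distrib, Emat_row]
  ring

omit [AddCommGroup K] in
lemma Amat_col (x y u v c : K) : ∑ r, Amat K x y u v r c = 0 := by
  simp only [Amat, Matrix.sub_apply, Matrix.add_apply, Finset.sum_sub_distrib,
    Finset.sum_add_distrib, Emat_col]
  ring

lemma Amat_diag (x y u v k : K) :
    (∑ p : K × K, if p.1 + p.2 = k then Amat K x y u v p.1 p.2 else 0)
      = (if x + u = k then 1 else 0) + (if y + v = k then 1 else 0)
        - (if x + v = k then 1 else 0) - (if y + u = k then 1 else 0) := by
  simp only [Amat, Matrix.sub_apply, Matrix.add_apply]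
  have h : ∀ (c : Prop) [Decidable c] (a b d e : ℤ),
      (if c then a + b - d - e else 0)
        = (if c then a else 0) + (if c then b else 0) - (if c then d else 0)
          - (if c then e else 0) := by
    intro c _ a b d e; split <;> simp
  simp only [h, Finset.sum_sub_distrib, Finset.sum_add_distrib, Emat_diag]

end helpers

/-- For the cyclic group `ZMod g`, `i ≠ 0` with `2 * i.val < g`, and `j ∉ {0, 1}`,
the matrix `X(i,j)` is admissible. -/
theorem Xmat_admissible (g : ℕ) [NeZero g] (i j : ZMod g)
    (hi : i ≠ 0) (h2i : 2 * ZMod.val i < g) (hj0 : j ≠ 0) (hj1 : j ≠ 1) :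
    Admissible (ZMod g) (Xmat g i j) := by
  refine ⟨?_, ?_, ?_⟩
  · intro r
    simp only [Xmat, Matrix.add_apply, Matrix.sum_apply, Finset.sum_add_distrib, Amat_row]
    rw [Finset.sum_comm]
    simp [Amat_row]
  · intro c
    simp only [Xmat, Matrix.add_apply, Matrix.sum_apply, Finset.sum_add_distrib, Amat_col]
    rw [Finset.sum_comm]
    simp [Amat_col]
  · intro k
    have hsplit : ∀ p : ZMod g × ZMod g,
        (if p.1 + p.2 = k then Xmat g i j p.1 p.2 else 0)
          = (if p.1 + p.2 = k then Amat (ZMod g) i 0 j 0 p.1 p.2 else 0)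
            + ∑ a ∈ Finset.Icc 1 (ZMod.val i),
              (if p.1 + p.2 = k then
                Amat (ZMod g) (i - (a : ZMod g)) (j + (a : ZMod g) - 1) 1 0 p.1 p.2 else 0) := by
      intro p
      simp only [Xmat, Matrix.add_apply, Matrix.sum_apply]
      split
      · rfl
      · simp
    rw [Finset.sum_congr rfl fun p _ => hsplit p, Finset.sum_add_distrib, Amat_diag,
      Finset.sum_comm]
    have hterm : ∀ a : ℕ,
        (∑ p : ZMod g × ZMod g, if p.1 + p.2 = k then
            Amat (ZMod g) (i - (a : ZMod g)) (j + (a : ZMod g) - 1) 1 0 p.1 p.2 else 0)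
          = ((if i - (a : ZMod g) + 1 = k then 1 else 0) + (if j + (a : ZMod g) - 1 = k then 1 else 0)
            - (if i - (a : ZMod g) = k then 1 else 0) - (if j + (a : ZMod g) = k then 1 else 0) : ℤ) := by
      intro a
      rw [Amat_diag]
      ring_nf
    rw [Finset.sum_congr rfl fun a _ => hterm a]
    set F : ℕ → ℤ := fun b =>
      (if i - (b : ZMod g) = k then 1 else 0) + (if j + (b : ZMod g) = k then 1 else 0) with hFdef
    have htel : (∑ a ∈ Finset.Icc 1 (ZMod.val i),
        ((if i - (a : ZMod g) + 1 = k then 1 else 0) + (if j + (a : ZMod g) - 1 = k then 1 else 0)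
          - (if i - (a : ZMod g) = k then 1 else 0) - (if j + (a : ZMod g) = k then 1 else 0) : ℤ))
        = F 0 - F (ZMod.val i) := by
      rw [show Finset.Icc 1 (ZMod.val i) = Finset.Ico 1 (ZMod.val i + 1) from
        (Finset.Ico_add_one_right_eq_Icc 1 (ZMod.val i)).symm, Finset.sum_Ico_eq_sum_range]
      simp only [Nat.add_sub_cancel]
      have step : ∀ b : ℕ,
          ((if i - ((1 + b : ℕ) : ZMod g) + 1 = k then 1 else 0)
            + (if j + ((1 + b : ℕ) : ZMod g) - 1 = k then 1 else 0)
            - (if i - ((1 + b : ℕ) : ZMod g) = k then 1 else 0)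
            - (if j + ((1 + b : ℕ) : ZMod g) = k then 1 else 0) : ℤ) = F b - F (b + 1) := by
        intro b
        have e1 : i - ((1 + b : ℕ) : ZMod g) + 1 = i - (b : ZMod g) := by push_cast; ring
        have e2 : j + ((1 + b : ℕ) : ZMod g) - 1 = j + (b : ZMod g) := by push_cast; ring
        have e3 : i - ((1 + b : ℕ) : ZMod g) = i - ((b + 1 : ℕ) : ZMod g) := by push_cast; ring
        have e4 : j + ((1 + b : ℕ) : ZMod g) = j + ((b + 1 : ℕ) : ZMod g) := by push_cast; ring
        rw [e1, e2, e3, e4, hFdef]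
        ring
      rw [Finset.sum_congr rfl fun b _ => step b]
      simpa using Finset.sum_range_sub' F (ZMod.val i)
    rw [htel, hFdef]
    have hv : ((ZMod.val i : ℕ) : ZMod g) = i := by
      simp [ZMod.natCast_val, ZMod.cast_id]
    simp only [hv, Nat.cast_zero, sub_zero, add_zero, zero_add]
    ring
end

section
/- Let G = Z_g with g ≥ 3. There exists a Z-basis of the group adm(G) of admissible matrices consisting of (g−1)(g−2) matrices, each of degree at most g. In particular adm(Z_g) is a free abelian group of rank (g−1)(g−2). -/
namespace AdmAux

variable {K : Type} [AddCommGroup K] [Fintype K] [DecidableEq K]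

lemma Emat_apply (x y a b : K) :
    Emat K x y a b = if x = a ∧ y = b then 1 else 0 := by exact rfl

lemma Emat_nonneg (x y a b : K) : (0 : ℤ) ≤ Emat K x y a b := by
  rw [Emat_apply]; split <;> norm_num

lemma rowSum_E (x y i : K) : ∑ j, Emat K x y i j = if x = i then 1 else 0 := by
  simp [Emat_apply, ite_and, Finset.sum_ite_eq]

lemma colSum_E (x y j : K) : ∑ i, Emat K x y i j = if y = j then 1 else 0 := by
  simp only [Emat_apply, ite_and]
  rw [Finset.sum_ite_eq]
  simp

lemma diagSum_E (x y k : K) :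
    (∑ p : K × K, if p.1 + p.2 = k then Emat K x y p.1 p.2 else 0)
      = if x + y = k then 1 else 0 := by
  have h : ∀ a b : K, (if a + b = k then Emat K x y a b else 0)
      = if x = a ∧ y = b then (if x + y = k then (1:ℤ) else 0) else 0 := by
    intro a b
    by_cases h1 : x = a <;> by_cases h2 : y = b <;>
      simp [Emat_apply, h1, h2] <;> subst_vars <;> tauto
  rw [Fintype.sum_prod_type]
  simp only [h, ite_and]
  rw [Finset.sum_comm]
  simp [Finset.sum_ite_eq]

lemma totSum_E (x y : K) : (∑ p : K × K, Emat K x y p.1 p.2) = 1 := by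
  rw [Fintype.sum_prod_type]
  simp [Emat_apply, ite_and, Finset.sum_ite_eq]

lemma adm_zero : Admissible K (0 : Matrix K K ℤ) := by
  refine ⟨fun i => by simp, fun j => by simp, fun k => ?_⟩
  simp

lemma adm_add {M N : Matrix K K ℤ} (hM : Admissible K M) (hN : Admissible K N) :
    Admissible K (M + N) := by
  obtain ⟨hM1, hM2, hM3⟩ := hM
  obtain ⟨hN1, hN2, hN3⟩ := hN
  refine ⟨fun i => ?_, fun j => ?_, fun k => ?_⟩
  · simp [Matrix.add_apply, Finset.sum_add_distrib, hM1 i, hN1 i]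
  · simp [Matrix.add_apply, Finset.sum_add_distrib, hM2 j, hN2 j]
  · have h : ∀ p : K × K, (if p.1 + p.2 = k then (M + N) p.1 p.2 else 0)
        = (if p.1 + p.2 = k then M p.1 p.2 else 0) + (if p.1 + p.2 = k then N p.1 p.2 else 0) := by
      intro p; split_ifs <;> simp [Matrix.add_apply]
    rw [Finset.sum_congr rfl (fun p _ => h p), Finset.sum_add_distrib, hM3 k, hN3 k]
    norm_num

lemma adm_smul {M : Matrix K K ℤ} (z : ℤ) (hM : Admissible K M) :
    Admissible K (z • M) := by
  obtain ⟨hM1, hM2, hM3⟩ := hM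
  refine ⟨fun i => ?_, fun j => ?_, fun k => ?_⟩
  · simp [Matrix.smul_apply, ← Finset.mul_sum, hM1 i]
  · simp [Matrix.smul_apply, ← Finset.mul_sum, hM2 j]
  · have h : ∀ p : K × K, (if p.1 + p.2 = k then (z • M) p.1 p.2 else 0)
        = z * (if p.1 + p.2 = k then M p.1 p.2 else 0) := by
      intro p; split_ifs <;> simp [Matrix.smul_apply]
    rw [Finset.sum_congr rfl (fun p _ => h p), ← Finset.mul_sum, hM3 k]
    norm_num

lemma adm_neg {M : Matrix K K ℤ} (hM : Admissible K M) : Admissible K (-M) := by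
  have := adm_smul (-1) hM
  simpa using this

lemma adm_sub {M N : Matrix K K ℤ} (hM : Admissible K M) (hN : Admissible K N) :
    Admissible K (M - N) := by
  have := adm_add hM (adm_neg hN)
  simpa [sub_eq_add_neg] using this

lemma adm_sum {ι : Type*} {s : Finset ι} {f : ι → Matrix K K ℤ}
    (h : ∀ i ∈ s, Admissible K (f i)) : Admissible K (∑ i ∈ s, f i) := by
  classical
  induction s using Finset.induction_on with
  | empty => simpa using adm_zero (K := K)
  | insert _ _ hnotmem ih =>
    rw [Finset.sum_insert hnotmem]
    exact adm_add (h _ (Finset.mem_insert_self _ _))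
      (ih (fun i hi => h i (Finset.mem_insert_of_mem hi)))

abbrev Idx (g : ℕ) : Type := {r : ZMod g // r ≠ 0 ∧ r ≠ 1} × {j : ZMod g // j ≠ 0}

section ZModPart

variable {g : ℕ} [NeZero g]

local notation "G" => ZMod g

def Pm (r j : G) : Matrix G G ℤ :=
  Emat G r j - Emat G r (j-1) + Emat G 1 (j-1)
    - Emat G 1 (r+j-1) + Emat G 0 (r+j-1) - Emat G 0 j

lemma Pm_apply (r j a b : G) :
    Pm r j a b = Emat G r j a b - Emat G r (j-1) a b + Emat G 1 (j-1) a b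
      - Emat G 1 (r+j-1) a b + Emat G 0 (r+j-1) a b - Emat G 0 j a b := by
  simp [Pm, Matrix.sub_apply, Matrix.add_apply]

lemma Pm_admissible (r j : G) : Admissible G (Pm r j) := by
  refine ⟨fun i => ?_, fun b => ?_, fun k => ?_⟩
  · simp only [Pm_apply, Finset.sum_add_distrib, Finset.sum_sub_distrib, rowSum_E]
    split_ifs <;> ring
  · simp only [Pm_apply, Finset.sum_add_distrib, Finset.sum_sub_distrib, colSum_E]
    split_ifs <;> ring
  · have h : ∀ a b : G, (if a + b = k then Pm r j a b else 0)
        = (if a + b = k then Emat G r j a b else 0)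
          - (if a + b = k then Emat G r (j-1) a b else 0)
          + (if a + b = k then Emat G 1 (j-1) a b else 0)
          - (if a + b = k then Emat G 1 (r+j-1) a b else 0)
          + (if a + b = k then Emat G 0 (r+j-1) a b else 0)
          - (if a + b = k then Emat G 0 j a b else 0) := by
      intro a b
      by_cases hc : a + b = k <;> simp [hc, Pm_apply]
    calc (∑ p : G × G, if p.1 + p.2 = k then Pm r j p.1 p.2 else 0)
        = (∑ p : G × G, if p.1 + p.2 = k then Emat G r j p.1 p.2 else 0)
          - (∑ p : G × G, if p.1 + p.2 = k then Emat G r (j-1) p.1 p.2 else 0)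
          + (∑ p : G × G, if p.1 + p.2 = k then Emat G 1 (j-1) p.1 p.2 else 0)
          - (∑ p : G × G, if p.1 + p.2 = k then Emat G 1 (r+j-1) p.1 p.2 else 0)
          + (∑ p : G × G, if p.1 + p.2 = k then Emat G 0 (r+j-1) p.1 p.2 else 0)
          - (∑ p : G × G, if p.1 + p.2 = k then Emat G 0 j p.1 p.2 else 0) := by
          simp only [h, Finset.sum_add_distrib, Finset.sum_sub_distrib]
      _ = 0 := by
          simp only [diagSum_E]
          have e1 : r + (j - 1) = r + j - 1 := by ring
          have e2 : (1:G) + (j - 1) = j := by ring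
          have e3 : (1:G) + (r + j - 1) = r + j := by ring
          have e4 : (0:G) + (r + j - 1) = r + j - 1 := by ring
          have e5 : (0:G) + j = j := by ring
          rw [e1, e2, e3, e4, e5]
          split_ifs <;> ring

lemma matDeg_Pm_le (r j : G) : matDeg G (Pm r j) ≤ 3 := by
  have hb : ∀ p : G × G, max (Pm r j p.1 p.2) 0
      ≤ Emat G r j p.1 p.2 + Emat G 1 (j-1) p.1 p.2 + Emat G 0 (r+j-1) p.1 p.2 := by
    rintro ⟨a, b⟩
    have h1 := Emat_nonneg (K := G) r j a b
    have h2 := Emat_nonneg (K := G) r (j-1) a b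
    have h3 := Emat_nonneg (K := G) 1 (j-1) a b
    have h4 := Emat_nonneg (K := G) 1 (r+j-1) a b
    have h5 := Emat_nonneg (K := G) 0 (r+j-1) a b
    have h6 := Emat_nonneg (K := G) 0 j a b
    rw [Pm_apply]
    apply max_le <;> simp only [] <;> omega
  calc matDeg G (Pm r j)
      ≤ ∑ p : G × G, (Emat G r j p.1 p.2 + Emat G 1 (j-1) p.1 p.2
          + Emat G 0 (r+j-1) p.1 p.2) := Finset.sum_le_sum (fun p _ => hb p)
    _ = 3 := by
        simp only [Finset.sum_add_distrib, totSum_E]; norm_num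


lemma support_lemma (hg : 3 ≤ g) (Y : Matrix G G ℤ) (hY : Admissible G Y)
    (h0 : ∀ a b : G, a ≠ 0 → a ≠ 1 → Y a b = 0) : Y = 0 := by
  haveI : Fact (1 < g) := ⟨by omega⟩
  obtain ⟨hrow, hcol, hdiag⟩ := hY
  have h01 : (0 : G) ≠ 1 := zero_ne_one
  have hsum01 : ∀ f : G → ℤ, (∀ a : G, a ≠ 0 → a ≠ 1 → f a = 0) →
      ∑ a : G, f a = f 0 + f 1 := by
    intro f hf
    rw [← Finset.sum_subset (Finset.subset_univ ({0,1} : Finset G))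
      (fun x _ hx => by
        simp only [Finset.mem_insert, Finset.mem_singleton, not_or] at hx
        exact hf x hx.1 hx.2)]
    exact Finset.sum_pair h01
  have hcolsum : ∀ b : G, Y 0 b + Y 1 b = 0 := by
    intro b
    rw [← hcol b, hsum01 (fun a => Y a b) (fun a ha0 ha1 => h0 a b ha0 ha1)]
  have hdiag2 : ∀ k : G, Y 0 k + Y 1 (k - 1) = 0 := by
    intro k
    have hd := hdiag k
    rw [Fintype.sum_prod_type] at hd
    have hinner : ∀ a : G, (∑ b : G, if a + b = k then Y a b else 0) = Y a (k - a) := by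
      intro a
      have hre : ∀ b : G, (if a + b = k then Y a b else 0) = if k - a = b then Y a b else 0 := by
        intro b
        have : (a + b = k) ↔ (k - a = b) := by
          rw [sub_eq_iff_eq_add', eq_comm]
        simp only [this]
      simp only [hre, Finset.sum_ite_eq, Finset.mem_univ, if_true]
    rw [Finset.sum_congr rfl (fun a _ => hinner a)] at hd
    rw [hsum01 (fun a => Y a (k - a)) (fun a ha0 ha1 => h0 a _ ha0 ha1)] at hd
    simpa using hd
  have hstep : ∀ x : G, Y 1 x = Y 1 (x + 1) := by
    intro x
    have h1 := hdiag2 (x + 1)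
    have h2 := hcolsum (x + 1)
    have h3 : x + 1 - 1 = x := by ring
    rw [h3] at h1
    linarith
  have hnat : ∀ n : ℕ, Y 1 (n : G) = Y 1 0 := by
    intro n
    induction n with
    | zero => norm_num
    | succ m ih => push_cast; rw [← hstep, ih]
  have hconst : ∀ x : G, Y 1 x = Y 1 0 := by
    intro x
    have : ((x.val : ℕ) : G) = x := by rw [ZMod.natCast_val, ZMod.cast_id]
    rw [← this, hnat]
  have h10 : Y 1 0 = 0 := by
    have hr := hrow 1
    rw [Finset.sum_congr rfl (fun b _ => hconst b)] at hr
    rw [Finset.sum_const, Finset.card_univ, ZMod.card, nsmul_eq_mul] at hr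
    have hgz : (g : ℤ) ≠ 0 := by exact_mod_cast (by omega : g ≠ 0)
    exact (mul_eq_zero.mp hr).resolve_left hgz
  ext a b
  by_cases ha0 : a = 0
  · subst ha0
    have := hcolsum b
    have h1b : Y 1 b = 0 := by rw [hconst b, h10]
    simp [h1b] at this
    simpa using this
  by_cases ha1 : a = 1
  · subst ha1
    rw [hconst b, h10]; rfl
  · rw [h0 a b ha0 ha1]; rfl

-- ZMod.val helper lemmas
lemma val_inj' {x y : G} (h : x.val = y.val) : x = y := by
  have hx : ((x.val : ℕ) : G) = x := by rw [ZMod.natCast_val, ZMod.cast_id]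
  have hy : ((y.val : ℕ) : G) = y := by rw [ZMod.natCast_val, ZMod.cast_id]
  rw [← hx, ← hy, h]

lemma val_pos' {x : G} (h : x ≠ 0) : 1 ≤ x.val := by
  rcases Nat.eq_zero_or_pos x.val with h0 | h1
  · exact absurd ((ZMod.val_eq_zero x).mp h0) h
  · exact h1

lemma val_sub_one {x : G} (h : x ≠ 0) : (x - 1).val = x.val - 1 := by
  have h1 : 1 ≤ x.val := val_pos' h
  have hx : ((x.val : ℕ) : G) = x := by rw [ZMod.natCast_val, ZMod.cast_id]
  have hlt : x.val - 1 < g := lt_of_le_of_lt (Nat.sub_le _ _) (ZMod.val_lt x)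
  have : x - 1 = ((x.val - 1 : ℕ) : G) := by
    rw [Nat.cast_sub h1, hx]; norm_num
  rw [this, ZMod.val_natCast, Nat.mod_eq_of_lt hlt]

lemma val_add_one {x : G} (h : x + 1 ≠ 0) : (x + 1).val = x.val + 1 := by
  have hx : ((x.val : ℕ) : G) = x := by rw [ZMod.natCast_val, ZMod.cast_id]
  have hne : x.val + 1 ≠ g := by
    intro hc
    apply h
    rw [← hx]
    push_cast
    rw [show ((x.val : ℕ) : G) + 1 = ((x.val + 1 : ℕ) : G) by push_cast; ring, hc,
      ZMod.natCast_self]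
  have hlt : x.val + 1 < g := lt_of_le_of_ne (ZMod.val_lt x) hne
  have : x + 1 = ((x.val + 1 : ℕ) : G) := by push_cast; rw [hx]
  rw [this, ZMod.val_natCast, Nat.mod_eq_of_lt hlt]

lemma neg_one_val (hg : 3 ≤ g) : (-1 : G).val = g - 1 := by
  have : ((g - 1 : ℕ) : G) = -1 := by
    rw [Nat.cast_sub (by omega : 1 ≤ g), ZMod.natCast_self]; ring
  rw [← this, ZMod.val_natCast, Nat.mod_eq_of_lt (by omega)]

lemma Pm_apply_ne (r j a b : G) (ha0 : a ≠ 0) (ha1 : a ≠ 1) :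
    Pm r j a b = (if r = a ∧ j = b then 1 else 0)
      - (if r = a ∧ j = b + 1 then 1 else 0) := by
  have e0 : (0 : G) ≠ a := Ne.symm ha0
  have e1 : (1 : G) ≠ a := Ne.symm ha1
  rw [Pm_apply]
  simp only [Emat_apply, e0, e1, false_and, if_false]
  have hc : (j - 1 = b) ↔ (j = b + 1) := sub_eq_iff_eq_add
  simp only [hc]
  ring

lemma sum_pick (c : Idx g → ℤ) (a b : G) (ha0 : a ≠ 0) (ha1 : a ≠ 1) :
    (∑ t : Idx g, c t * (if t.1.1 = a ∧ t.2.1 = b then 1 else 0))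
      = if hb : b = 0 then 0 else c ⟨⟨a, ha0, ha1⟩, ⟨b, hb⟩⟩ := by
  by_cases hb : b = 0
  · rw [dif_pos hb]
    apply Finset.sum_eq_zero
    intro t _
    have hne : ¬(t.1.1 = a ∧ t.2.1 = b) := by
      rintro ⟨-, h2⟩
      exact t.2.2 (by rw [h2, hb])
    simp [hne]
  · rw [dif_neg hb]
    rw [Fintype.sum_eq_single (⟨⟨a, ha0, ha1⟩, ⟨b, hb⟩⟩ : Idx g)]
    · simp
    · intro t ht
      have hne : ¬(t.1.1 = a ∧ t.2.1 = b) := by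
        rintro ⟨h1, h2⟩
        exact ht (Prod.ext (Subtype.ext h1) (Subtype.ext h2))
      simp [hne]

lemma S_apply (c : Idx g → ℤ) (a b : G) (ha0 : a ≠ 0) (ha1 : a ≠ 1) :
    (∑ t : Idx g, c t • Pm t.1.1 t.2.1) a b
      = ∑ t : Idx g, c t * ((if t.1.1 = a ∧ t.2.1 = b then 1 else 0)
          - (if t.1.1 = a ∧ t.2.1 = b + 1 then 1 else 0)) := by
  rw [Matrix.sum_apply]
  refine Finset.sum_congr rfl fun t _ => ?_
  rw [Matrix.smul_apply, Pm_apply_ne _ _ _ _ ha0 ha1, smul_eq_mul]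

lemma S_entry (c : Idx g → ℤ) (a b : G) (ha0 : a ≠ 0) (ha1 : a ≠ 1) :
    (∑ t : Idx g, c t • Pm t.1.1 t.2.1) a b
      = (if hb : b = 0 then 0 else c ⟨⟨a, ha0, ha1⟩, ⟨b, hb⟩⟩)
        - (if hb1 : b + 1 = 0 then 0 else c ⟨⟨a, ha0, ha1⟩, ⟨b + 1, hb1⟩⟩) := by
  rw [S_apply c a b ha0 ha1]
  have h : ∀ t : Idx g, c t * ((if t.1.1 = a ∧ t.2.1 = b then 1 else 0)
          - (if t.1.1 = a ∧ t.2.1 = b + 1 then (1:ℤ) else 0))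
      = c t * (if t.1.1 = a ∧ t.2.1 = b then 1 else 0)
        - c t * (if t.1.1 = a ∧ t.2.1 = b + 1 then 1 else 0) := fun t => by ring
  rw [Finset.sum_congr rfl (fun t _ => h t), Finset.sum_sub_distrib,
    sum_pick c a b ha0 ha1, sum_pick c a (b + 1) ha0 ha1]

lemma phi_eq (c : Idx g → ℤ) (r j : G) (hr0 : r ≠ 0) (hr1 : r ≠ 1) (hj : j ≠ 0) :
    (∑ l ∈ Finset.univ.filter (fun l : G => j.val ≤ l.val),
        (∑ t : Idx g, c t • Pm t.1.1 t.2.1) r l)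
      = c ⟨⟨r, hr0, hr1⟩, ⟨j, hj⟩⟩ := by
  rw [Finset.sum_congr rfl (fun l _ => S_apply c r l hr0 hr1), Finset.sum_comm]
  have key : ∀ t : Idx g,
      (∑ l ∈ Finset.univ.filter (fun l : G => j.val ≤ l.val),
        c t * ((if t.1.1 = r ∧ t.2.1 = l then 1 else 0)
          - (if t.1.1 = r ∧ t.2.1 = l + 1 then 1 else 0)))
      = if t = ⟨⟨r, hr0, hr1⟩, ⟨j, hj⟩⟩ then c t else 0 := by
    intro t
    by_cases ht : t.1.1 = r
    · have hrw : ∀ l : G, (t.2.1 = l + 1) ↔ (t.2.1 - 1 = l) :=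
        fun l => (sub_eq_iff_eq_add).symm
      simp only [ht, true_and, hrw, ← Finset.mul_sum, Finset.sum_sub_distrib,
        Finset.sum_ite_eq, Finset.mem_filter, Finset.mem_univ, true_and]
      have hv : (t.2.1 - 1).val = t.2.1.val - 1 := val_sub_one t.2.2
      have h1 : 1 ≤ t.2.1.val := val_pos' t.2.2
      have hj1 : 1 ≤ j.val := val_pos' hj
      have hiff : (t.2.1 = j) ↔ (t.2.1.val = j.val) :=
        ⟨fun h => by rw [h], val_inj'⟩
      by_cases h2 : t.2.1 = j
      · have hteq : t = ⟨⟨r, hr0, hr1⟩, ⟨j, hj⟩⟩ :=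
          Prod.ext (Subtype.ext ht) (Subtype.ext h2)
        have hval : t.2.1.val = j.val := hiff.mp h2
        rw [hv, if_pos hteq, if_pos (by omega : j.val ≤ t.2.1.val),
          if_neg (by omega : ¬ j.val ≤ t.2.1.val - 1)]
        ring
      · have hteq : t ≠ ⟨⟨r, hr0, hr1⟩, ⟨j, hj⟩⟩ := by
          intro h
          exact h2 (by rw [h])
        have hval : t.2.1.val ≠ j.val := fun h => h2 (hiff.mpr h)
        rw [hv, if_neg hteq]
        by_cases h3 : j.val ≤ t.2.1.val
        · rw [if_pos h3, if_pos (by omega)]; ring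
        · rw [if_neg h3, if_neg (by omega)]; ring
    · have hteq : t ≠ ⟨⟨r, hr0, hr1⟩, ⟨j, hj⟩⟩ := by
        intro h
        exact ht (by rw [h])
      rw [if_neg hteq]
      apply Finset.sum_eq_zero
      intro l _
      simp [ht]
  rw [Finset.sum_congr rfl (fun t _ => key t), Finset.sum_ite_eq' Finset.univ,
    if_pos (Finset.mem_univ _)]

def coef (M : Matrix G G ℤ) (t : Idx g) : ℤ :=
  ∑ l ∈ Finset.univ.filter (fun l : G => t.2.1.val ≤ l.val), M t.1.1 l

lemma repro (hg : 3 ≤ g) (M : Matrix G G ℤ) (hM : Admissible G M) :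
    M = ∑ t : Idx g, coef M t • Pm t.1.1 t.2.1 := by
  haveI : Fact (1 < g) := ⟨by omega⟩
  set S : Matrix G G ℤ := ∑ t : Idx g, coef M t • Pm t.1.1 t.2.1 with hS
  have hSadm : Admissible G S :=
    adm_sum (fun t _ => adm_smul _ (Pm_admissible t.1.1 t.2.1))
  have h10 : (1 : G) ≠ 0 := one_ne_zero
  have hsupp : ∀ a b : G, a ≠ 0 → a ≠ 1 → (M - S) a b = 0 := by
    intro a b ha0 ha1
    have hE := S_entry (coef M) a b ha0 ha1
    have hgoal : S a b = M a b := by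
      show (∑ t : Idx g, coef M t • Pm t.1.1 t.2.1) a b = M a b
      rw [hE]
      by_cases hb : b = 0
      · subst hb
        rw [dif_pos rfl, dif_neg (by simpa using h10)]
        have hval1 : ((0 : G) + 1).val = 1 := by
          rw [zero_add, ZMod.val_one]
        simp only [coef, hval1]
        have hfil : Finset.univ.filter (fun l : G => 1 ≤ l.val)
            = Finset.univ.erase 0 := by
          ext l
          simp only [Finset.mem_filter, Finset.mem_univ, true_and, Finset.mem_erase,
            and_true]
          constructor
          · intro h h0; rw [h0] at h; simp [ZMod.val_zero] at h
          · intro h; exact val_pos' h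
        rw [hfil]
        have := Finset.add_sum_erase Finset.univ (fun l => M a l) (Finset.mem_univ (0:G))
        have hrow := hM.1 a
        linarith
      · rw [dif_neg hb]
        by_cases hb1 : b + 1 = 0
        · rw [dif_pos hb1]
          have hbv : b.val = g - 1 := by
            have : b = -1 := by
              have := hb1
              linear_combination this
            rw [this, neg_one_val hg]
          simp only [coef]
          have hfil : Finset.univ.filter (fun l : G => b.val ≤ l.val) = {b} := by
            ext l
            simp only [Finset.mem_filter, Finset.mem_univ, true_and, Finset.mem_singleton]
            constructor
            · intro h
              apply val_inj'
              have := ZMod.val_lt l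
              omega
            · intro h; rw [h]
          rw [hfil, Finset.sum_singleton, sub_zero]
        · rw [dif_neg hb1]
          simp only [coef]
          have hv1 : (b + 1).val = b.val + 1 := val_add_one hb1
          have hfil : Finset.univ.filter (fun l : G => b.val ≤ l.val)
              = insert b (Finset.univ.filter (fun l : G => (b+1).val ≤ l.val)) := by
            ext l
            simp only [Finset.mem_filter, Finset.mem_univ, true_and, Finset.mem_insert,
              hv1]
            constructor
            · intro h
              rcases Nat.eq_or_lt_of_le h with he | hl
              · left; exact val_inj' he.symm
              · right; omega
            · rintro (h | h)
              · rw [h]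
              · omega
          have hnot : b ∉ Finset.univ.filter (fun l : G => (b+1).val ≤ l.val) := by
            simp [hv1]
          rw [hfil, Finset.sum_insert hnot]
          ring
    rw [Matrix.sub_apply, hgoal]
    ring
  have := support_lemma hg (M - S) (adm_sub hM hSadm) hsupp
  have hMS : M - S = 0 := this
  calc M = M - S + S := by abel
  _ = S := by rw [hMS]; simp

lemma card_J (hg : 3 ≤ g) : Fintype.card {j : ZMod g // j ≠ 0} = g - 1 := by
  haveI : Fact (1 < g) := ⟨by omega⟩
  rw [Fintype.card_subtype]
  have : Finset.univ.filter (fun j : ZMod g => j ≠ 0) = Finset.univ.erase 0 :=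
    Finset.filter_ne' _ _
  rw [this, Finset.card_erase_of_mem (Finset.mem_univ _), Finset.card_univ, ZMod.card]

lemma card_R (hg : 3 ≤ g) : Fintype.card {r : ZMod g // r ≠ 0 ∧ r ≠ 1} = g - 2 := by
  haveI : Fact (1 < g) := ⟨by omega⟩
  rw [Fintype.card_subtype]
  have h1 : Finset.univ.filter (fun r : ZMod g => r ≠ 0 ∧ r ≠ 1)
      = (Finset.univ.erase 0).erase 1 := by
    ext r
    simp only [Finset.mem_filter, Finset.mem_univ, true_and, Finset.mem_erase]
    tauto
  have h10 : (1 : ZMod g) ∈ Finset.univ.erase (0 : ZMod g) := by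
    simp [one_ne_zero]
  rw [h1, Finset.card_erase_of_mem h10,
    Finset.card_erase_of_mem (Finset.mem_univ _), Finset.card_univ, ZMod.card]
  omega

lemma card_Idx (hg : 3 ≤ g) : Fintype.card (Idx g) = (g - 1) * (g - 2) := by
  rw [Fintype.card_prod, card_J hg, card_R hg, Nat.mul_comm]

lemma main_core (hg : 3 ≤ g) (M : Matrix G G ℤ) (hM : Admissible G M) :
    ∃! d : Idx g → ℤ, M = ∑ t : Idx g, d t • Pm t.1.1 t.2.1 := by
  refine ⟨coef M, repro hg M hM, ?_⟩
  intro d hd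
  funext t
  obtain ⟨⟨r, hr0, hr1⟩, ⟨j, hj⟩⟩ := t
  have : coef M (⟨⟨r, hr0, hr1⟩, ⟨j, hj⟩⟩ : Idx g) = d ⟨⟨r, hr0, hr1⟩, ⟨j, hj⟩⟩ := by
    calc coef M (⟨⟨r, hr0, hr1⟩, ⟨j, hj⟩⟩ : Idx g)
        = ∑ l ∈ Finset.univ.filter (fun l : G => j.val ≤ l.val), M r l := rfl
      _ = ∑ l ∈ Finset.univ.filter (fun l : G => j.val ≤ l.val),
            (∑ t : Idx g, d t • Pm t.1.1 t.2.1) r l := by rw [← hd]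
      _ = d ⟨⟨r, hr0, hr1⟩, ⟨j, hj⟩⟩ := phi_eq d r j hr0 hr1 hj
  rw [this]

end ZModPart
end AdmAux

/-- For `G = ZMod g`, `g ≥ 3`, there is a `ℤ`-basis of the group of admissible matrices
consisting of `(g−1)(g−2)` matrices, each of degree at most `g`; in particular `adm (ZMod g)`
is free abelian of rank `(g−1)(g−2)`. -/
theorem adm_zmod_basis (g : ℕ) [NeZero g] (hg : 3 ≤ g) :
    ∃ B : Fin ((g - 1) * (g - 2)) → Matrix (ZMod g) (ZMod g) ℤ,
      (∀ t, Admissible (ZMod g) (B t)) ∧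
      (∀ t, matDeg (ZMod g) (B t) ≤ (g : ℤ)) ∧
      (∀ M : Matrix (ZMod g) (ZMod g) ℤ, Admissible (ZMod g) M →
        ∃! c : Fin ((g - 1) * (g - 2)) → ℤ, M = ∑ t, c t • B t) := by

  classical
  haveI : Fact (1 < g) := ⟨by omega⟩
  have hcard : Fintype.card (Fin ((g - 1) * (g - 2))) = Fintype.card (AdmAux.Idx g) := by
    rw [Fintype.card_fin, AdmAux.card_Idx hg]
  let e : Fin ((g - 1) * (g - 2)) ≃ AdmAux.Idx g := Fintype.equivOfCardEq hcard
  have hsum : ∀ c : AdmAux.Idx g → ℤ,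
      (∑ t : Fin ((g - 1) * (g - 2)), c (e t) • AdmAux.Pm (e t).1.1 (e t).2.1)
        = ∑ t : AdmAux.Idx g, c t • AdmAux.Pm t.1.1 t.2.1 :=
    fun c => Fintype.sum_equiv e _ _ (fun t => rfl)
  refine ⟨fun t => AdmAux.Pm (e t).1.1 (e t).2.1,
    fun t => AdmAux.Pm_admissible _ _,
    fun t => le_trans (AdmAux.matDeg_Pm_le _ _) (by exact_mod_cast (by omega : 3 ≤ g)),
    fun M hM => ?_⟩
  obtain ⟨d, hd, hdu⟩ := AdmAux.main_core hg M hM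
  refine ⟨fun t => d (e t), ?_, ?_⟩
  · show M = ∑ t : Fin ((g - 1) * (g - 2)), d (e t) • AdmAux.Pm (e t).1.1 (e t).2.1
    rw [hsum d]; exact hd
  · intro c' hc'
    have hde : (fun s => c' (e.symm s)) = d := by
      apply hdu
      rw [← hsum (fun s => c' (e.symm s))]
      simpa using hc'
    funext t
    have := congrFun hde (e t)
    simpa using this
end

section
/- Let G = Z_g. If M is an admissible matrix for G such that m_{i,j} = 0 for all pairs (i,j) with i ≠ 0 and j ∉ {0,1}, then M is the zero matrix. -/
/-- If `M` is admissible for `ZMod g` and `M i j = 0` for all `(i, j)` with `i ≠ 0` and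
`j ∉ {0, 1}`, then `M = 0`. -/
theorem adm_vanishing_zero (g : ℕ) [NeZero g] (M : Matrix (ZMod g) (ZMod g) ℤ)
    (hM : Admissible (ZMod g) M)
    (hK : ∀ i j : ZMod g, i ≠ 0 → j ≠ 0 → j ≠ 1 → M i j = 0) :
    M = 0 := by
  obtain ⟨hrow, hcol, hdiag⟩ := hM
  by_cases hg1 : g = 1
  · subst hg1
    ext i j
    have h := hrow i
    rw [Fintype.sum_subsingleton _ j] at h
    simpa using h
  · have hg2 : 1 < g := lt_of_le_of_ne (Nat.one_le_iff_ne_zero.mpr (NeZero.ne g)) (Ne.symm hg1)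
    haveI : Fact (1 < g) := ⟨hg2⟩
    have h01 : (0 : ZMod g) ≠ 1 := zero_ne_one
    have hz : ∀ i j : ZMod g, j ≠ 0 → j ≠ 1 → M i j = 0 := by
      intro i j hj0 hj1
      by_cases hi : i = 0
      · subst hi
        have h := hcol j
        rw [Finset.sum_eq_single 0 (fun b _ hb => hK b j hb hj0 hj1)
          (fun h => absurd (Finset.mem_univ _) h)] at h
        exact h
      · exact hK i j hi hj0 hj1
    have hrow2 : ∀ i : ZMod g, M i 0 + M i 1 = 0 := by
      intro i
      have h := hrow i
      rw [← Finset.sum_subset (Finset.subset_univ ({0, 1} : Finset (ZMod g)))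
        (fun x _ hx => by
          simp only [Finset.mem_insert, Finset.mem_singleton] at hx
          push_neg at hx
          exact hz i x hx.1 hx.2)] at h
      rwa [Finset.sum_pair h01] at h
    have hdiag2 : ∀ k : ZMod g, M k 0 + M (k - 1) 1 = 0 := by
      intro k
      have h := hdiag k
      rw [← Finset.sum_subset (Finset.subset_univ
        ({(k, 0), (k - 1, 1)} : Finset (ZMod g × ZMod g)))
        (fun p _ hp => by
          simp only [Finset.mem_insert, Finset.mem_singleton] at hp
          push_neg at hp
          by_cases hpk : p.1 + p.2 = k
          · simp only [hpk, if_true]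
            by_cases h0 : p.2 = 0
            · exact absurd (Prod.ext_iff.mpr ⟨by rw [← hpk, h0, add_zero], h0⟩) hp.1
            · by_cases h1 : p.2 = 1
              · refine absurd (Prod.ext_iff.mpr ⟨?_, h1⟩) hp.2
                rw [← hpk, h1]; ring
              · exact hz p.1 p.2 h0 h1
          · simp [hpk])] at h
      rw [Finset.sum_pair (by simp [Prod.ext_iff, h01])] at h
      simpa [sub_add_cancel] using h
    have hstep : ∀ k : ZMod g, M k 0 = M (k - 1) 0 := by
      intro k
      have h1 := hdiag2 k
      have h2 := hrow2 (k - 1)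
      linarith
    have hconst : ∀ n : ℕ, M (n : ZMod g) 0 = M 0 0 := by
      intro n
      induction n with
      | zero => simp
      | succ m ih =>
        have h := hstep ((m + 1 : ℕ) : ZMod g)
        have e : ((m + 1 : ℕ) : ZMod g) - 1 = (m : ℕ) := by push_cast; ring
        rw [h, e, ih]
    have hall : ∀ i : ZMod g, M i 0 = M 0 0 := fun i => by
      have h := hconst i.val
      rwa [ZMod.natCast_val, ZMod.cast_id] at h
    have hc0 : M 0 0 = 0 := by
      have h := hcol 0
      rw [Finset.sum_congr rfl (fun i _ => hall i), Finset.sum_const, Finset.card_univ,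
        ZMod.card, nsmul_eq_mul] at h
      have hgz : (g : ℤ) ≠ 0 := by exact_mod_cast NeZero.ne g
      exact (mul_eq_zero.mp h).resolve_left hgz
    ext i j
    by_cases hj0 : j = 0
    · subst hj0; simp [hall i, hc0]
    · by_cases hj1 : j = 1
      · subst hj1
        have h := hrow2 i
        have h0 : M i 0 = 0 := by rw [hall i, hc0]
        simp only [Matrix.zero_apply]
        linarith
      · simp [hz i j hj0 hj1]
end

section
/- Let G and H be finite abelian groups, i, j ∈ G and k, l ∈ H with j ≠ 0 and k ≠ 0. Then the matrix B^{i,j}_{k,l} = (E^{(i,k)}_{(j,l)} + E^{(i+j,0)}_{(0,l)} + E^{(i,0)}_{(0,k+l)}) − (E^{(i+j,0)}_{(0,k+l)} + E^{(i,k)}_{(0,l)} + E^{(i,0)}_{(j,l)}) is an admissible matrix for the group G × H of degree 3. -/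
/-- The matrix `B^{i,j}_{k,l}` over `G × H`. -/
def Bmat (G H : Type) [AddCommGroup G] [DecidableEq G] [AddCommGroup H] [DecidableEq H]
    (i j : G) (k l : H) : Matrix (G × H) (G × H) ℤ :=
  (Emat (G × H) (i, k) (j, l) + Emat (G × H) (i + j, 0) (0, l)
      + Emat (G × H) (i, 0) (0, k + l))
    - (Emat (G × H) (i + j, 0) (0, k + l) + Emat (G × H) (i, k) (0, l)
      + Emat (G × H) (i, 0) (j, l))

lemma Emat_row_s7 (K : Type) [DecidableEq K] [Fintype K] (x y a : K) :
    ∑ b, Emat K x y a b = if x = a then 1 else 0 := by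
  simp [Emat, Matrix.single, ite_and]

lemma Emat_col_s7 (K : Type) [DecidableEq K] [Fintype K] (x y b : K) :
    ∑ a, Emat K x y a b = if y = b then 1 else 0 := by
  simp [Emat, Matrix.single, ite_and]

lemma Emat_conv (K : Type) [AddCommGroup K] [DecidableEq K] [Fintype K] (x y c : K) :
    (∑ p : K × K, if p.1 + p.2 = c then Emat K x y p.1 p.2 else 0)
      = if x + y = c then 1 else 0 := by
  rw [Finset.sum_eq_single (x, y)]
  · simp [Emat, Matrix.single]
  · rintro ⟨a, b⟩ - hp
    simp only [Emat, Matrix.single, Matrix.of_apply]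
    rcases eq_or_ne x a with rfl | hx
    · rcases eq_or_ne y b with rfl | hy
      · exact absurd rfl hp
      · simp [hy]
    · simp [hx]
  · simp

lemma Emat_total (K : Type) [DecidableEq K] [Fintype K] (x y : K) :
    (∑ p : K × K, Emat K x y p.1 p.2) = 1 := by
  rw [Fintype.sum_prod_type]
  simp [Emat_row_s7]

lemma Bmat_max (G H : Type) [AddCommGroup G] [Fintype G] [DecidableEq G]
    [AddCommGroup H] [Fintype H] [DecidableEq H]
    (i j : G) (k l : H) (hj : j ≠ 0) (hk : k ≠ 0) (a b : G × H) :
    max (Bmat G H i j k l a b) 0 =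
      (Emat (G × H) (i, k) (j, l) + Emat (G × H) (i + j, 0) (0, l)
        + Emat (G × H) (i, 0) (0, k + l)) a b := by
  simp only [Bmat, Matrix.sub_apply, Matrix.add_apply, Emat, Matrix.single,
    Matrix.of_apply, Prod.mk.injEq]
  obtain ⟨a1, a2⟩ := a
  obtain ⟨b1, b2⟩ := b
  simp only [Prod.mk.injEq]
  split_ifs <;> simp_all

/-- For `j ≠ 0` in `G` and `k ≠ 0` in `H`, the matrix `B^{i,j}_{k,l}` is admissible for
`G × H` and has degree `3`. -/
theorem Bmat_admissible_deg_three (G H : Type)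
    [AddCommGroup G] [Fintype G] [DecidableEq G]
    [AddCommGroup H] [Fintype H] [DecidableEq H]
    (i j : G) (k l : H) (hj : j ≠ 0) (hk : k ≠ 0) :
    Admissible (G × H) (Bmat G H i j k l) ∧ matDeg (G × H) (Bmat G H i j k l) = 3 := by
  refine ⟨⟨fun a => ?_, fun b => ?_, fun c => ?_⟩, ?_⟩
  · simp only [Bmat, Matrix.sub_apply, Matrix.add_apply, Finset.sum_sub_distrib,
      Finset.sum_add_distrib, Emat_row_s7]
    ring
  · simp only [Bmat, Matrix.sub_apply, Matrix.add_apply, Finset.sum_sub_distrib,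
      Finset.sum_add_distrib, Emat_col_s7]
    ring
  · simp only [Bmat, Matrix.sub_apply, Matrix.add_apply]
    have h : ∀ p : (G × H) × (G × H),
        (if p.1 + p.2 = c then
          (Emat (G × H) (i, k) (j, l) p.1 p.2 + Emat (G × H) (i + j, 0) (0, l) p.1 p.2
            + Emat (G × H) (i, 0) (0, k + l) p.1 p.2)
          - (Emat (G × H) (i + j, 0) (0, k + l) p.1 p.2 + Emat (G × H) (i, k) (0, l) p.1 p.2
            + Emat (G × H) (i, 0) (j, l) p.1 p.2) else 0)
        = ((if p.1 + p.2 = c then Emat (G × H) (i, k) (j, l) p.1 p.2 else 0)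
          + (if p.1 + p.2 = c then Emat (G × H) (i + j, 0) (0, l) p.1 p.2 else 0)
          + (if p.1 + p.2 = c then Emat (G × H) (i, 0) (0, k + l) p.1 p.2 else 0))
          - ((if p.1 + p.2 = c then Emat (G × H) (i + j, 0) (0, k + l) p.1 p.2 else 0)
          + (if p.1 + p.2 = c then Emat (G × H) (i, k) (0, l) p.1 p.2 else 0)
          + (if p.1 + p.2 = c then Emat (G × H) (i, 0) (j, l) p.1 p.2 else 0)) := by
      intro p; split <;> simp
    simp only [h, Finset.sum_sub_distrib, Finset.sum_add_distrib, Emat_conv]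
    simp only [Prod.mk_add_mk, add_zero, zero_add]
    ring
  · unfold matDeg
    have h : ∀ p : (G × H) × (G × H), max (Bmat G H i j k l p.1 p.2) 0 =
        (Emat (G × H) (i, k) (j, l) + Emat (G × H) (i + j, 0) (0, l)
          + Emat (G × H) (i, 0) (0, k + l)) p.1 p.2 := fun p =>
      Bmat_max G H i j k l hj hk p.1 p.2
    simp only [h, Matrix.add_apply, Finset.sum_add_distrib, Emat_total]
    norm_num
end

section
/- Let G and H be finite abelian groups of orders g, h ≥ 3 respectively. If adm(G) is a free abelian group of rank (g−1)(g−2) and adm(H) is free of rank (h−1)(h−2), then adm(G × H) is a free abelian group of rank (gh−1)(gh−2). -/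
/-- `AdmBasis K r` says that the group of admissible matrices for `K` has a `ℤ`-basis of
cardinality `r`, i.e. it is free abelian of rank `r`. -/
def AdmBasis (K : Type) [AddCommGroup K] [Fintype K] [DecidableEq K] (r : ℕ) : Prop :=
  ∃ B : Fin r → Matrix K K ℤ,
    (∀ t, Admissible K (B t)) ∧
    (∀ M : Matrix K K ℤ, Admissible K M → ∃! c : Fin r → ℤ, M = ∑ t, c t • B t)

section Aux

open Finset

variable (K : Type) [AddCommGroup K] [Fintype K] [DecidableEq K]
variable (R : Type) [CommRing R]

/-- The constraint map whose kernel is the set of admissible matrices. -/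
def admMap : Matrix K K R →ₗ[R] (K → R) × (K → R) × (K → R) where
  toFun M := (fun i => ∑ j, M i j, fun j => ∑ i, M i j,
    fun k => ∑ p : K × K, if p.1 + p.2 = k then M p.1 p.2 else 0)
  map_add' M N := by
    refine Prod.ext ?_ (Prod.ext ?_ ?_) <;> funext x <;>
        simp only [Prod.fst_add, Prod.snd_add, Pi.add_apply, Matrix.add_apply] <;>
        rw [← Finset.sum_add_distrib]
    exact Finset.sum_congr rfl fun p _ => by split <;> simp
  map_smul' r M := by
    refine Prod.ext ?_ (Prod.ext ?_ ?_) <;> funext x <;>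
      simp [Finset.mul_sum, mul_ite, mul_zero]

/-- The delta function at `c`. -/
def dlt (c : K) : K → R := fun k => if c = k then 1 else 0

omit [AddCommGroup K] in
lemma sum_dlt (c : K) : ∑ k, dlt K R c k = 1 := by simp [dlt]

omit [AddCommGroup K] in
lemma sum_smul_dlt (r : K → R) : ∑ a, r a • dlt K R a = r := by
  funext k
  simp [dlt, Finset.sum_apply, Pi.smul_apply, smul_eq_mul, mul_ite]

lemma admMap_std (a b : K) :
    admMap K R (Matrix.single a b 1) = (dlt K R a, dlt K R b, dlt K R (a + b)) := by
  refine Prod.ext ?_ (Prod.ext ?_ ?_)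
  · funext x; simp [admMap, Matrix.single, dlt, ite_and, Finset.sum_ite_eq]
  · funext x; simp [admMap, Matrix.single, dlt, ite_and, Finset.sum_ite_eq]
  · funext x
    show (∑ p : K × K, if p.1 + p.2 = x then Matrix.single a b 1 p.1 p.2 else 0)
      = dlt K R (a + b) x
    rw [Finset.sum_eq_single (a, b)]
    · simp [Matrix.single, dlt]
    · rintro ⟨p1, p2⟩ - hp
      split
      · rw [Matrix.single]
        simp only [Matrix.of_apply]
        rw [if_neg]
        rintro ⟨rfl, rfl⟩; exact hp rfl
      · rfl
    · simp

lemma admMap_eq_zero_iff (M : Matrix K K R) :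
    admMap K R M = 0 ↔ ((∀ i, ∑ j, M i j = 0) ∧ (∀ j, ∑ i, M i j = 0) ∧
      (∀ k : K, (∑ p : K × K, if p.1 + p.2 = k then M p.1 p.2 else 0) = 0)) := by
  show ((fun i => ∑ j, M i j, fun j => ∑ i, M i j,
    fun k => ∑ p : K × K, if p.1 + p.2 = k then M p.1 p.2 else 0) :
      (K → R) × (K → R) × (K → R)) = 0 ↔ _
  rw [Prod.ext_iff, Prod.ext_iff]
  simp [funext_iff]

lemma admissible_iff_mem_ker (M : Matrix K K ℤ) :
    Admissible K M ↔ M ∈ LinearMap.ker (admMap K ℤ) := by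
  rw [LinearMap.mem_ker, admMap_eq_zero_iff]
  rfl

/-- The linear map recording the difference of total sums. -/
def qmap : ((K → ℚ) × (K → ℚ) × (K → ℚ)) →ₗ[ℚ] ℚ × ℚ where
  toFun x := (∑ k, x.1 k - ∑ k, x.2.1 k, ∑ k, x.2.1 k - ∑ k, x.2.2 k)
  map_add' x y := by
    simp only [Prod.fst_add, Prod.snd_add, Pi.add_apply, Finset.sum_add_distrib, Prod.mk_add_mk,
      Prod.mk.injEq]
    constructor <;> ring
  map_smul' r x := by
    simp only [Prod.smul_fst, Prod.smul_snd, Pi.smul_apply, smul_eq_mul, ← Finset.mul_sum,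
      RingHom.id_apply, Prod.smul_mk]
    rw [Prod.mk.injEq]
    constructor <;> ring

/-- The embedding into the third component. -/
def jmap : (K → ℚ) →ₗ[ℚ] ((K → ℚ) × (K → ℚ) × (K → ℚ)) where
  toFun e := (0, 0, e)
  map_add' e f := by simp [Prod.ext_iff]
  map_smul' r e := by simp [Prod.ext_iff]

lemma range_admMap_le : LinearMap.range (admMap K ℚ) ≤ LinearMap.ker (qmap K) := by
  rintro - ⟨M, rfl⟩
  have key : ∑ j, ∑ i, M i j = ∑ k, ∑ p : K × K, if p.1 + p.2 = k then M p.1 p.2 else 0 := by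
    symm
    rw [Finset.sum_comm]
    have h : ∀ p : K × K, (∑ k, if p.1 + p.2 = k then M p.1 p.2 else 0) = M p.1 p.2 := by
      intro p; rw [Finset.sum_ite_eq]; simp
    rw [Finset.sum_congr rfl fun p _ => h p, Fintype.sum_prod_type]
    exact Finset.sum_comm
  have key0 : ∑ i, ∑ j, M i j = ∑ j, ∑ i, M i j := Finset.sum_comm
  show qmap K (admMap K ℚ M) = 0
  show ((∑ i, ∑ j, M i j) - ∑ j, ∑ i, M i j,
    (∑ j, ∑ i, M i j) - ∑ k, ∑ p : K × K, if p.1 + p.2 = k then M p.1 p.2 else 0) = 0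
  rw [key0, key]
  simp

lemma ker_qmap_le_range : LinearMap.ker (qmap K) ≤ LinearMap.range (admMap K ℚ) := by
  rintro ⟨r, c, d⟩ hx
  have hx2 : (∑ k, r k - ∑ k, c k, ∑ k, c k - ∑ k, d k) = ((0 : ℚ), (0 : ℚ)) :=
    (LinearMap.mem_ker.mp hx :)
  rw [Prod.mk.injEq, sub_eq_zero, sub_eq_zero] at hx2
  obtain ⟨h1, h2⟩ := hx2
  set s : ℚ := ∑ k, r k with hs
  set D : Submodule ℚ (K → ℚ) :=
    Submodule.comap (jmap K) (LinearMap.range (admMap K ℚ)) with hD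
  have hw : ∀ a b : K, dlt K ℚ (a + b) - dlt K ℚ a - dlt K ℚ b + dlt K ℚ 0 ∈ D := by
    intro a b
    refine Submodule.mem_comap.mpr ⟨Matrix.single a b 1 - Matrix.single a 0 1
      - Matrix.single 0 b 1 + Matrix.single 0 0 1, ?_⟩
    rw [map_add, map_sub, map_sub, admMap_std, admMap_std, admMap_std, admMap_std]
    show _ = ((0 : K → ℚ), (0 : K → ℚ), dlt K ℚ (a + b) - dlt K ℚ a - dlt K ℚ b + dlt K ℚ 0)
    refine Prod.ext ?_ (Prod.ext ?_ ?_) <;>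
      simp only [Prod.fst_add, Prod.fst_sub, Prod.snd_add, Prod.snd_sub,
        add_zero, zero_add] <;> abel
  have hd : ∀ a : K, dlt K ℚ a - dlt K ℚ 0 ∈ D := by
    intro a
    let Ψ : K →+ ((K → ℚ) ⧸ D) := AddMonoidHom.mk'
      (fun x => Submodule.Quotient.mk (dlt K ℚ x - dlt K ℚ 0)) (by
        intro x y
        have h0 : (Submodule.Quotient.mk
            (dlt K ℚ (x + y) - dlt K ℚ x - dlt K ℚ y + dlt K ℚ 0) : (K → ℚ) ⧸ D) = 0 :=
          (Submodule.Quotient.mk_eq_zero D).mpr (hw x y)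
        have e : dlt K ℚ (x + y) - dlt K ℚ 0
            = ((dlt K ℚ x - dlt K ℚ 0) + (dlt K ℚ y - dlt K ℚ 0))
              + (dlt K ℚ (x + y) - dlt K ℚ x - dlt K ℚ y + dlt K ℚ 0) := by abel
        show Submodule.Quotient.mk _ = Submodule.Quotient.mk _ + Submodule.Quotient.mk _
        rw [e, Submodule.Quotient.mk_add, Submodule.Quotient.mk_add, h0, add_zero])
    have hcard : Fintype.card K • a = 0 := by
      exact card_nsmul_eq_zero
    have hzero : (Fintype.card K) • Ψ a = 0 := by rw [← map_nsmul, hcard, map_zero]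
    have hΨ : Ψ a = 0 := by
      rw [← Nat.cast_smul_eq_nsmul ℚ] at hzero
      refine (smul_eq_zero.mp hzero).resolve_left ?_
      exact_mod_cast Fintype.card_ne_zero
    exact (Submodule.Quotient.mk_eq_zero D).mp hΨ
  set e0 : K → ℚ := d - r - c + s • dlt K ℚ 0 with he0
  have hesum : ∑ k, e0 k = 0 := by
    simp only [he0, Pi.add_apply, Pi.sub_apply, Pi.smul_apply, smul_eq_mul]
    rw [Finset.sum_add_distrib, Finset.sum_sub_distrib, Finset.sum_sub_distrib,
      ← Finset.mul_sum, sum_dlt, ← h2, ← h1, ← hs]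
    ring
  have hemem : e0 ∈ D := by
    have step : ∑ a, e0 a • (dlt K ℚ a - dlt K ℚ 0)
        = (∑ a, e0 a • dlt K ℚ a) - (∑ a, e0 a) • dlt K ℚ 0 := by
      rw [Finset.sum_smul, ← Finset.sum_sub_distrib]
      exact Finset.sum_congr rfl fun a _ => smul_sub _ _ _
    have he2 : e0 = ∑ a, e0 a • (dlt K ℚ a - dlt K ℚ 0) := by
      rw [step, sum_smul_dlt, hesum, zero_smul, sub_zero]
    rw [he2]
    exact Submodule.sum_mem _ fun a _ => Submodule.smul_mem _ _ (hd a)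
  obtain ⟨Me, hMe⟩ := Submodule.mem_comap.mp hemem
  refine ⟨(∑ a, r a • Matrix.single a 0 1)
    + (∑ b, c b • (Matrix.single 0 b 1 - Matrix.single 0 0 1)) + Me, ?_⟩
  rw [map_add, map_add, map_sum, map_sum, hMe]
  simp only [map_smul, map_sub, admMap_std, add_zero, zero_add]
  have hj : jmap K e0 = ((0 : K → ℚ), (0 : K → ℚ), e0) := rfl
  rw [hj]
  have hcsum : (∑ k, c k) = s := by rw [← h1]
  have hdsum : (∑ k, d k) = s := by rw [← h2, ← h1]
  have crow : ∑ a : K, r a • dlt K ℚ a = r := sum_smul_dlt K ℚ r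
  have csum : ∑ a : K, r a • dlt K ℚ 0 = s • dlt K ℚ 0 := by
    rw [← Finset.sum_smul]
  have ccol : ∑ b : K, c b • (dlt K ℚ b - dlt K ℚ 0) = c - s • dlt K ℚ 0 := by
    rw [Finset.sum_congr rfl fun b _ => smul_sub (c b) _ _, Finset.sum_sub_distrib,
      sum_smul_dlt, ← Finset.sum_smul, hcsum]
  refine Prod.ext ?_ (Prod.ext ?_ ?_)
  · simp only [Prod.fst_add, Prod.fst_sum, Prod.smul_fst, Prod.fst_sub, sub_self, smul_zero,
      Finset.sum_const_zero, add_zero]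
    exact crow
  · simp only [Prod.snd_add, Prod.fst_add, Prod.snd_sum, Prod.fst_sum, Prod.smul_snd,
      Prod.smul_fst, Prod.snd_sub, Prod.fst_sub, add_zero]
    rw [csum, ccol]
    abel
  · simp only [Prod.snd_add, Prod.snd_sum, Prod.smul_snd, Prod.snd_sub, add_zero, zero_add]
    rw [crow, ccol, he0]
    abel

lemma range_admMap_eq : LinearMap.range (admMap K ℚ) = LinearMap.ker (qmap K) :=
  le_antisymm (range_admMap_le K) (ker_qmap_le_range K)

lemma finrank_ker_admMap (hk : 3 ≤ Fintype.card K) :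
    Module.finrank ℚ (LinearMap.ker (admMap K ℚ)) =
      (Fintype.card K - 1) * (Fintype.card K - 2) := by
  have hsurj : LinearMap.range (qmap K) = ⊤ := by
    rw [LinearMap.range_eq_top]
    rintro ⟨u, v⟩
    refine ⟨u • ((dlt K ℚ 0, 0, 0) : (K → ℚ) × (K → ℚ) × (K → ℚ))
      - v • ((0, 0, dlt K ℚ 0) : (K → ℚ) × (K → ℚ) × (K → ℚ)), ?_⟩
    rw [map_sub, map_smul, map_smul]
    have q1 : qmap K ((dlt K ℚ 0, 0, 0) : (K → ℚ) × (K → ℚ) × (K → ℚ)) = (1, 0) := by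
      show ((∑ k, dlt K ℚ 0 k) - ∑ k, (0 : K → ℚ) k,
        (∑ k, (0 : K → ℚ) k) - ∑ k, (0 : K → ℚ) k) = ((1 : ℚ), (0 : ℚ))
      rw [sum_dlt]; simp
    have q2 : qmap K ((0, 0, dlt K ℚ 0) : (K → ℚ) × (K → ℚ) × (K → ℚ)) = (0, -1) := by
      show ((∑ k, (0 : K → ℚ) k) - ∑ k, (0 : K → ℚ) k,
        (∑ k, (0 : K → ℚ) k) - ∑ k, dlt K ℚ 0 k) = ((0 : ℚ), (-1 : ℚ))
      rw [sum_dlt]; simp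
    rw [q1, q2]
    refine Prod.ext ?_ ?_ <;>
      simp [Prod.smul_fst, Prod.smul_snd, Prod.fst_sub, Prod.snd_sub]
  have hr1 := LinearMap.finrank_range_add_finrank_ker (admMap K ℚ)
  have hr2 := LinearMap.finrank_range_add_finrank_ker (qmap K)
  have hm : Module.finrank ℚ (Matrix K K ℚ) = Fintype.card K * Fintype.card K := by
    rw [Module.finrank_matrix]
    simp
  have ht : Module.finrank ℚ ((K → ℚ) × (K → ℚ) × (K → ℚ)) = 3 * Fintype.card K := by
    simp only [Module.finrank_prod, Module.finrank_pi]
    ring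
  have hrange : Module.finrank ℚ (LinearMap.range (qmap K)) = 2 := by
    rw [hsurj, finrank_top, Module.finrank_prod, Module.finrank_self]
  obtain ⟨m, hm3⟩ : ∃ m, Fintype.card K = m + 3 := ⟨Fintype.card K - 3, by omega⟩
  have goaleq : (m + 3 - 1) * (m + 3 - 2) = m * m + 3 * m + 2 := by
    have e1 : m + 3 - 1 = m + 2 := by omega
    have e2 : m + 3 - 2 = m + 1 := by omega
    rw [e1, e2]; ring
  have key : (m + 3) * (m + 3) = m * m + 6 * m + 9 := by ring
  rw [range_admMap_eq, hm, hm3, key] at hr1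
  rw [hrange, ht, hm3] at hr2
  rw [hm3, goaleq]
  omega

/-- Entrywise cast from integer matrices to rational matrices, as a `ℤ`-linear map. -/
def castM : Matrix K K ℤ →ₗ[ℤ] Matrix K K ℚ where
  toFun M := M.map fun x : ℤ => (x : ℚ)
  map_add' M N := by
    apply Matrix.ext; intro i j
    simp [Matrix.map_apply]
  map_smul' z M := by
    apply Matrix.ext; intro i j
    show ((z • M).map fun x : ℤ => (x : ℚ)) i j = ((RingHom.id ℤ) z • M.map fun x : ℤ => (x : ℚ)) i j
    rw [RingHom.id_apply, Matrix.map_apply, Matrix.smul_apply, Matrix.smul_apply,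
      Matrix.map_apply, zsmul_eq_mul, ← Int.cast_smul_eq_zsmul ℚ, smul_eq_mul]
    push_cast
    ring

lemma castM_injective : Function.Injective (castM K) := by
  intro M N h
  apply Matrix.ext; intro i j
  have := congrFun (congrFun (congrArg Matrix.of.symm h) i) j
  simpa [castM, Matrix.map_apply] using this

lemma mem_ker_castM_iff (N : Matrix K K ℤ) :
    castM K N ∈ LinearMap.ker (admMap K ℚ) ↔ N ∈ LinearMap.ker (admMap K ℤ) := by
  rw [LinearMap.mem_ker, LinearMap.mem_ker, admMap_eq_zero_iff, admMap_eq_zero_iff]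
  have e1 : ∀ i j : K, castM K N i j = ((N i j : ℚ)) := fun i j => rfl
  simp only [e1]
  have c1 : ∀ i : K, (∑ j, ((N i j : ℚ))) = ((∑ j, N i j : ℤ) : ℚ) := by
    intro i; push_cast; rfl
  have c2 : ∀ j : K, (∑ i, ((N i j : ℚ))) = ((∑ i, N i j : ℤ) : ℚ) := by
    intro j; push_cast; rfl
  have c3 : ∀ k : K, (∑ p : K × K, if p.1 + p.2 = k then ((N p.1 p.2 : ℚ)) else 0)
      = (((∑ p : K × K, if p.1 + p.2 = k then N p.1 p.2 else 0 : ℤ)) : ℚ) := by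
    intro k
    rw [Int.cast_sum]
    exact Finset.sum_congr rfl fun p _ => by split <;> simp
  simp only [c1, c2, c3, Int.cast_eq_zero]

theorem admBasis_of_three (hk : 3 ≤ Fintype.card K) :
    AdmBasis K ((Fintype.card K - 1) * (Fintype.card K - 2)) := by
  classical
  obtain ⟨n, b⟩ := Submodule.basisOfPid (Matrix.stdBasis ℤ K K)
    (LinearMap.ker (admMap K ℤ))
  set S := LinearMap.ker (admMap K ℤ) with hS
  set v : Fin n → Matrix K K ℚ := fun i => castM K ((b i : Matrix K K ℤ)) with hv
  have hvmem : ∀ i, v i ∈ LinearMap.ker (admMap K ℚ) :=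
    fun i => (mem_ker_castM_iff K _).mpr (b i).2
  have hli : LinearIndependent ℚ v := by
    have l1 : LinearIndependent ℤ (fun i => ((b i : Matrix K K ℤ))) :=
      b.linearIndependent.map' S.subtype (Submodule.ker_subtype S)
    have l2 : LinearIndependent ℤ v :=
      l1.map' (castM K) (LinearMap.ker_eq_bot.mpr (castM_injective K))
    exact (LinearIndependent.iff_fractionRing ℤ ℚ).mp l2
  have hspan : ∀ x ∈ LinearMap.ker (admMap K ℚ), x ∈ Submodule.span ℚ (Set.range v) := by
    intro x hx
    set d : ℤ := ∏ p : K × K, ((x p.1 p.2).den : ℤ) with hdd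
    have hd0 : d ≠ 0 := by
      rw [hdd]
      refine Finset.prod_ne_zero_iff.mpr fun p _ => ?_
      exact_mod_cast (x p.1 p.2).den_nz
    have hdvd : ∀ i j : K, ((x i j).den : ℤ) ∣ d := fun i j =>
      Finset.dvd_prod_of_mem _ (Finset.mem_univ (i, j))
    set N : Matrix K K ℤ := Matrix.of fun i j => d / ((x i j).den : ℤ) * (x i j).num with hN
    have hcast : castM K N = (d : ℚ) • x := by
      apply Matrix.ext; intro i j
      obtain ⟨t, ht⟩ := hdvd i j
      have hden0 : ((x i j).den : ℤ) ≠ 0 := by exact_mod_cast (x i j).den_nz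
      have hdiv : d / ((x i j).den : ℤ) = t := by
        rw [ht]; exact Int.mul_ediv_cancel_left _ hden0
      show ((N i j : ℤ) : ℚ) = (d : ℚ) • x i j
      rw [hN]
      simp only [Matrix.of_apply]
      rw [hdiv, ht, smul_eq_mul]
      push_cast
      have hnum : ((x i j).den : ℚ) * x i j = (x i j).num := by
        rw [mul_comm]
        exact Rat.mul_den_eq_num (x i j)
      calc (t : ℚ) * (x i j).num = (t : ℚ) * (((x i j).den : ℚ) * x i j) := by rw [hnum]
      _ = ((x i j).den : ℚ) * t * x i j := by ring
    have hNmem : N ∈ S := (mem_ker_castM_iff K N).mp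
      (hcast ▸ Submodule.smul_mem _ _ hx)
    have hNspan : castM K N ∈ Submodule.span ℚ (Set.range v) := by
      have hrep := b.sum_repr ⟨N, hNmem⟩
      have h2 := congrArg (fun y : S => castM K (y : Matrix K K ℤ)) hrep
      simp only at h2
      have h3 : castM K ((((∑ i, b.repr ⟨N, hNmem⟩ i • b i) : S) : Matrix K K ℤ))
          = ∑ i, b.repr ⟨N, hNmem⟩ i • castM K ((b i : Matrix K K ℤ)) := by
        push_cast [AddSubmonoidClass.coe_finset_sum]
        simp only [map_sum, map_smul]
      rw [h3] at h2
      rw [← h2]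
      refine Submodule.sum_mem _ fun i _ => ?_
      rw [← Int.cast_smul_eq_zsmul ℚ]
      exact Submodule.smul_mem _ _ (Submodule.subset_span ⟨i, rfl⟩)
    have hx2 : x = (d : ℚ)⁻¹ • castM K N := by
      rw [hcast, smul_smul, inv_mul_cancel₀ (by exact_mod_cast hd0), one_smul]
    rw [hx2]
    exact Submodule.smul_mem _ _ hNspan
  set vS : Fin n → (LinearMap.ker (admMap K ℚ)) := fun i => ⟨v i, hvmem i⟩ with hvS
  have hliS : LinearIndependent ℚ vS :=
    hli.of_comp (LinearMap.ker (admMap K ℚ)).subtype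
  have hspS : ⊤ ≤ Submodule.span ℚ (Set.range vS) := by
    rintro ⟨x, hx⟩ -
    have h1 : x ∈ Submodule.span ℚ (Set.range v) := hspan x hx
    have h0 : Set.range v = (LinearMap.ker (admMap K ℚ)).subtype '' (Set.range vS) := by
      rw [← Set.range_comp]; rfl
    rw [h0, Submodule.span_image] at h1
    obtain ⟨y, hy, hxy⟩ := h1
    have : y = ⟨x, hx⟩ := Subtype.ext hxy
    exact this ▸ hy
  have hn : n = (Fintype.card K - 1) * (Fintype.card K - 2) := by
    let bQ : Module.Basis (Fin n) ℚ (LinearMap.ker (admMap K ℚ)) := Module.Basis.mk hliS hspS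
    have := Module.finrank_eq_card_basis bQ
    rw [finrank_ker_admMap K hk, Fintype.card_fin] at this
    exact this.symm
  set b' : Module.Basis (Fin ((Fintype.card K - 1) * (Fintype.card K - 2))) ℤ S :=
    b.reindex (finCongr hn) with hb'
  refine ⟨fun t => ((b' t : Matrix K K ℤ)),
    fun t => (admissible_iff_mem_ker K _).mpr (b' t).2, fun M hM => ?_⟩
  have hMS : M ∈ S := (admissible_iff_mem_ker K M).mp hM
  have hcoe : ∀ c : Fin ((Fintype.card K - 1) * (Fintype.card K - 2)) → ℤ,
      (((∑ t, c t • b' t : S) : Matrix K K ℤ)) = ∑ t, c t • ((b' t : Matrix K K ℤ)) := by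
    intro c
    push_cast [AddSubmonoidClass.coe_finset_sum]
    rfl
  refine ⟨fun t => b'.repr ⟨M, hMS⟩ t, ?_, ?_⟩
  · have := b'.sum_repr ⟨M, hMS⟩
    have h2 := congrArg (fun y : S => (y : Matrix K K ℤ)) this
    simp only at h2
    rw [hcoe] at h2
    exact h2.symm
  · intro c' hc'
    have heq : (⟨M, hMS⟩ : S) = ∑ t, c' t • b' t := by
      apply Subtype.ext
      rw [hcoe]
      exact hc'
    have h3 := b'.repr_sum_self c'
    rw [← heq] at h3
    exact h3.symm

end Aux

/-- If `adm G` is free of rank `(g−1)(g−2)` and `adm H` is free of rank `(h−1)(h−2)`,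
where `g, h ≥ 3` are the orders of `G` and `H`, then `adm (G × H)` is free of rank
`(gh−1)(gh−2)`. -/
theorem adm_basis_prod (G H : Type)
    [AddCommGroup G] [Fintype G] [DecidableEq G]
    [AddCommGroup H] [Fintype H] [DecidableEq H]
    (hg : 3 ≤ Fintype.card G) (hh : 3 ≤ Fintype.card H)
    (hG : AdmBasis G ((Fintype.card G - 1) * (Fintype.card G - 2)))
    (hH : AdmBasis H ((Fintype.card H - 1) * (Fintype.card H - 2))) :
    AdmBasis (G × H)
      ((Fintype.card G * Fintype.card H - 1) * (Fintype.card G * Fintype.card H - 2)) := by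
  have hcard : Fintype.card (G × H) = Fintype.card G * Fintype.card H := Fintype.card_prod G H
  have h3 : 3 ≤ Fintype.card (G × H) := by
    rw [hcard]; calc (3:ℕ) ≤ 3 * 3 := by norm_num
    _ ≤ Fintype.card G * Fintype.card H := Nat.mul_le_mul hg hh
  have := admBasis_of_three (G × H) h3
  rwa [hcard] at this
end

section
/- Let G be a finite abelian group, T the tripod (three leaves, one interior node). A Laurent monomial relation among the coordinates x_f, indexed by group-based flows f = [i,j,−i−j] on T, given by a matrix M via L(M) = ∏_{i,j∈G} x_{[i,j,−i−j]}^{m_{i,j}}, satisfies that L(M) = 1 holds identically under the parametrization x_{[i,j,k]} = y_{(1,i)} y_{(2,j)} y_{(3,k)} (for all nonzero values of the parameters y) if and only if M is admissible for G. -/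

lemma zpow_finset_sum₀ {ι : Type*} {x : ℂ} (hx : x ≠ 0) (s : Finset ι) (f : ι → ℤ) :
    x ^ (∑ i ∈ s, f i) = ∏ i ∈ s, x ^ f i := by
  classical
  induction s using Finset.cons_induction with
  | empty => simp
  | cons a s ha ih => rw [Finset.sum_cons, Finset.prod_cons, zpow_add₀ hx, ih]

lemma two_zpow_eq_one {n : ℤ} (h : (2 : ℂ) ^ n = 1) : n = 0 := by
  have h2 : ((2:ℝ):ℂ) ^ n = ((1:ℝ):ℂ) := by push_cast; exact h
  have h3 : (2:ℝ) ^ n = 1 := by exact_mod_cast h2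
  exact zpow_right_injective₀ (a := (2:ℝ)) (by norm_num) (by norm_num)
    (by simpa using h3)

lemma prod_split {G : Type} [AddCommGroup G] [Fintype G] [DecidableEq G]
    (M : Matrix G G ℤ) (y0 y1 y2 : G → ℂ)
    (h0 : ∀ g, y0 g ≠ 0) (h1 : ∀ g, y1 g ≠ 0) (h2 : ∀ g, y2 g ≠ 0) :
    ∏ i : G, ∏ j : G, (y0 i * y1 j * y2 (-i - j)) ^ (M i j)
      = (∏ i, y0 i ^ (∑ j, M i j)) * (∏ j, y1 j ^ (∑ i, M i j)) *
        ∏ k, y2 k ^ (∑ p : G × G, if p.1 + p.2 = -k then M p.1 p.2 else 0) := by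
  simp only [mul_zpow, Finset.prod_mul_distrib]
  congr 1
  congr 1
  · exact Finset.prod_congr rfl fun i _ => (zpow_finset_sum₀ (h0 i) _ _).symm
  · rw [Finset.prod_comm]
    exact Finset.prod_congr rfl fun j _ => (zpow_finset_sum₀ (h1 j) _ _).symm
  · rw [← Finset.prod_product', Finset.univ_product_univ]
    rw [← Finset.prod_fiberwise Finset.univ (fun p : G × G => -p.1 - p.2)
      (fun p : G × G => y2 (-p.1 - p.2) ^ M p.1 p.2)]
    refine Finset.prod_congr rfl fun k _ => ?_
    have step1 : ∏ p ∈ Finset.univ.filter (fun p : G × G => -p.1 - p.2 = k),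
        y2 (-p.1 - p.2) ^ M p.1 p.2
        = ∏ p ∈ Finset.univ.filter (fun p : G × G => -p.1 - p.2 = k),
        y2 k ^ M p.1 p.2 := by
      refine Finset.prod_congr rfl fun p hp => ?_
      rw [(Finset.mem_filter.1 hp).2]
    rw [step1, ← zpow_finset_sum₀ (h2 k), Finset.sum_filter]
    congr 1
    refine Finset.sum_congr rfl fun p _ => ?_
    congr 1
    rw [eq_iff_iff]
    rw [show -p.1 - p.2 = -(p.1 + p.2) by abel, neg_eq_iff_eq_neg]

/-- For the tripod, the Laurent monomial `L(M) = ∏_{i,j} x_{[i,j,−i−j]}^{m_{i,j}}` equals `1`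
identically under the parametrization `x_{[i,j,k]} = y_{(1,i)} y_{(2,j)} y_{(3,k)}` for all
nonzero parameter values `y` if and only if `M` is admissible for `G`. -/
theorem laurent_rel_iff_admissible (G : Type) [AddCommGroup G] [Fintype G] [DecidableEq G]
    (M : Matrix G G ℤ) :
    (∀ y : Fin 3 → G → ℂ, (∀ e g, y e g ≠ 0) →
        ∏ i : G, ∏ j : G, (y 0 i * y 1 j * y 2 (-i - j)) ^ (M i j) = 1)
      ↔ Admissible G M := by
  constructor
  · intro H
    refine ⟨?_, ?_, ?_⟩
    · intro i0
      set y : Fin 3 → G → ℂ := fun e g => if e = 0 ∧ g = i0 then 2 else 1 with hy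
      have hne : ∀ e g, y e g ≠ 0 := by
        intro e g; simp only [hy]; split <;> norm_num
      have h := H y hne
      rw [prod_split M (y 0) (y 1) (y 2) (hne 0) (hne 1) (hne 2)] at h
      have e1 : ∀ j : G, y 1 j = 1 := by intro j; simp [hy]
      have e2 : ∀ j : G, y 2 j = 1 := by intro j; simp [hy]
      have e0 : ∀ i : G, y 0 i = if i = i0 then 2 else 1 := by intro i; simp [hy]
      simp only [e0, e1, e2, one_zpow, Finset.prod_const_one, mul_one] at h
      rw [Finset.prod_eq_single i0 (fun b _ hb => by simp [hb]) (by simp)] at h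
      simp only [if_pos rfl] at h
      exact two_zpow_eq_one h
    · intro j0
      set y : Fin 3 → G → ℂ := fun e g => if e = 1 ∧ g = j0 then 2 else 1 with hy
      have hne : ∀ e g, y e g ≠ 0 := by
        intro e g; simp only [hy]; split <;> norm_num
      have h := H y hne
      rw [prod_split M (y 0) (y 1) (y 2) (hne 0) (hne 1) (hne 2)] at h
      have e0 : ∀ j : G, y 0 j = 1 := by intro j; simp [hy]
      have e2 : ∀ j : G, y 2 j = 1 := by intro j; simp [hy]
      have e1 : ∀ i : G, y 1 i = if i = j0 then 2 else 1 := by intro i; simp [hy]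
      simp only [e0, e1, e2, one_zpow, Finset.prod_const_one, one_mul, mul_one] at h
      rw [Finset.prod_eq_single j0 (fun b _ hb => by simp [hb]) (by simp)] at h
      simp only [if_pos rfl] at h
      exact two_zpow_eq_one h
    · intro k0
      set y : Fin 3 → G → ℂ := fun e g => if e = 2 ∧ g = -k0 then 2 else 1 with hy
      have hne : ∀ e g, y e g ≠ 0 := by
        intro e g; simp only [hy]; split <;> norm_num
      have h := H y hne
      rw [prod_split M (y 0) (y 1) (y 2) (hne 0) (hne 1) (hne 2)] at h
      have e0 : ∀ j : G, y 0 j = 1 := by intro j; simp [hy]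
      have e1 : ∀ j : G, y 1 j = 1 := by intro j; simp [hy]
      have e2 : ∀ i : G, y 2 i = if i = -k0 then 2 else 1 := by intro i; simp [hy]
      simp only [e0, e1, e2, one_zpow, Finset.prod_const_one, one_mul] at h
      rw [Finset.prod_eq_single (-k0) (fun b _ hb => by simp [hb]) (by simp)] at h
      simp only [if_pos rfl, neg_neg] at h
      exact two_zpow_eq_one h
  · rintro ⟨h1, h2, h3⟩ y hy
    rw [prod_split M (y 0) (y 1) (y 2) (hy 0) (hy 1) (hy 2)]
    simp [h1, h2, h3]
end
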